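/- arXiv:1512.08088 — 4 statements merged into one kernel-verified Lean document; each statement's English description precedes it below -/
import Mathlib

section
/- Let A be a commutative semiring with twisted product (a,b) ∗ (c,d) = (ac+bd, ad+bc) on A × A. An equivalence relation ρ on A is a congruence (i.e., compatible with addition and multiplication) if and only if ρ, viewed as a subset of A × A, is an ideal of the semiring (A × A, +, ∗). -/
/-- The twisted product on `A × A`. -/
def tmul {A : Type*} [CommSemiring A] (p q : A × A) : A × A :=
  (p.1 * q.1 + p.2 * q.2, p.1 * q.2 + p.2 * q.1)

section Twisted

variable {A : Type*} [CommSemiring A]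

theorem tmul_eq_smul_add_smul_swap (s p : A × A) : tmul s p = s.1 • p + s.2 • p.swap := by
  simp [tmul, Prod.ext_iff]

theorem tmul_mk_zero (c : A) (p : A × A) : tmul (c, 0) p = c • p := by
  simp [tmul_eq_smul_add_smul_swap]

variable {ρ : Set (A × A)}

theorem smul_mem_of_mul_mem (hrefl : ∀ a : A, (a, a) ∈ ρ)
    (hmul : ∀ a b c d : A, (a, b) ∈ ρ → (c, d) ∈ ρ → (a * c, b * d) ∈ ρ)
    (c : A) {p : A × A} (hp : p ∈ ρ) : c • p ∈ ρ :=
  hmul c c p.1 p.2 (hrefl c) hp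

theorem tmul_mem_of_congruence (hrefl : ∀ a : A, (a, a) ∈ ρ)
    (hsymm : ∀ a b : A, (a, b) ∈ ρ → (b, a) ∈ ρ)
    (hadd : ∀ p ∈ ρ, ∀ q ∈ ρ, p + q ∈ ρ)
    (hmul : ∀ a b c d : A, (a, b) ∈ ρ → (c, d) ∈ ρ → (a * c, b * d) ∈ ρ)
    (s : A × A) {p : A × A} (hp : p ∈ ρ) : tmul s p ∈ ρ := by
  rw [tmul_eq_smul_add_smul_swap]
  exact hadd _ (smul_mem_of_mul_mem hrefl hmul s.1 hp) _
    (smul_mem_of_mul_mem hrefl hmul s.2 (hsymm _ _ hp))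

theorem mul_mem_of_smul_mem (htrans : ∀ a b c : A, (a, b) ∈ ρ → (b, c) ∈ ρ → (a, c) ∈ ρ)
    (hsmul : ∀ (c : A), ∀ p ∈ ρ, c • p ∈ ρ) {a b c d : A} (hab : (a, b) ∈ ρ)
    (hcd : (c, d) ∈ ρ) : (a * c, b * d) ∈ ρ := by
  have hac : (a * c, b * c) ∈ ρ := by
    simpa [mul_comm c] using hsmul c _ hab
  exact htrans _ _ _ hac (hsmul b _ hcd)

end Twisted

/-- An equivalence relation `ρ` on a commutative semiring `A` is a congruence
(compatible with addition and multiplication) if and only if `ρ`, viewed as a subset of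
`A × A`, is an ideal of the semiring `(A × A, +, ∗)` with the twisted product. -/
theorem congruence_iff_ideal {A : Type*} [CommSemiring A] (ρ : Set (A × A))
    (hrefl : ∀ a : A, (a, a) ∈ ρ)
    (hsymm : ∀ a b : A, (a, b) ∈ ρ → (b, a) ∈ ρ)
    (htrans : ∀ a b c : A, (a, b) ∈ ρ → (b, c) ∈ ρ → (a, c) ∈ ρ) :
    ((∀ a b c d : A, (a, b) ∈ ρ → (c, d) ∈ ρ → (a + c, b + d) ∈ ρ) ∧
      (∀ a b c d : A, (a, b) ∈ ρ → (c, d) ∈ ρ → (a * c, b * d) ∈ ρ)) ↔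
    (ρ.Nonempty ∧ (∀ p ∈ ρ, ∀ q ∈ ρ, p + q ∈ ρ) ∧
      (∀ s : A × A, ∀ p ∈ ρ, tmul s p ∈ ρ)) := by
  constructor
  · rintro ⟨hadd, hmul⟩
    have hadd' : ∀ p ∈ ρ, ∀ q ∈ ρ, p + q ∈ ρ := fun p hp q hq => hadd _ _ _ _ hp hq
    exact ⟨⟨(0, 0), hrefl 0⟩, hadd', fun s _ hp => tmul_mem_of_congruence hrefl hsymm hadd' hmul s hp⟩
  · rintro ⟨-, hadd, htmul⟩
    have hsmul : ∀ (c : A), ∀ p ∈ ρ, c • p ∈ ρ := fun c p hp => tmul_mk_zero c p ▸ htmul _ p hp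
    exact ⟨fun a b c d hab hcd => hadd (a, b) hab (c, d) hcd,
      fun _ _ _ _ hab hcd => mul_mem_of_smul_mem htrans hsmul hab hcd⟩
end

section
/- Let ρ be a congruence on a commutative semiring A. Define √ρ = {(a,b) ∈ A × A : (a+c, b+c)^{∗n} ∈ ρ for some c ∈ A and some positive integer n}, where ∗ denotes the twisted product on A × A. Then √ρ is a congruence on A containing ρ, and (√ρ)₊ = √ρ, where σ₊ = {(a,b) : (a+c,b+c) ∈ σ for some c}. -/
/-- Twisted powers, with `(a,b)^{∗0} = (1,0)`. -/
def tpow {A : Type*} [CommSemiring A] (p : A × A) : ℕ → A × A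
  | 0 => (1, 0)
  | n + 1 => tmul (tpow p n) p

/-- `ρ` is a congruence on the commutative semiring `A`. -/
def IsCong {A : Type*} [CommSemiring A] (ρ : Set (A × A)) : Prop :=
  (∀ a : A, (a, a) ∈ ρ) ∧
  (∀ a b : A, (a, b) ∈ ρ → (b, a) ∈ ρ) ∧
  (∀ a b c : A, (a, b) ∈ ρ → (b, c) ∈ ρ → (a, c) ∈ ρ) ∧
  (∀ a b c d : A, (a, b) ∈ ρ → (c, d) ∈ ρ → (a + c, b + d) ∈ ρ) ∧
  (∀ a b c d : A, (a, b) ∈ ρ → (c, d) ∈ ρ → (a * c, b * d) ∈ ρ)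

/-- `σ₊ = {(a,b) : (a+c, b+c) ∈ σ for some c}`. -/
def plusPart {A : Type*} [CommSemiring A] (σ : Set (A × A)) : Set (A × A) :=
  {p | ∃ c : A, (p.1 + c, p.2 + c) ∈ σ}

/-- `√ρ = {(a,b) : (a+c, b+c)^{∗n} ∈ ρ for some c and some positive n}`. -/
def rad {A : Type*} [CommSemiring A] (ρ : Set (A × A)) : Set (A × A) :=
  {p | ∃ c : A, ∃ n : ℕ, 0 < n ∧ tpow (p.1 + c, p.2 + c) n ∈ ρ}

@[ext]
structure Twisted (A : Type*) where
  fst : A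
  snd : A

namespace Twisted

variable {A : Type*} [CommSemiring A]

def ofProd (p : A × A) : Twisted A := ⟨p.1, p.2⟩

instance : Add (Twisted A) := ⟨fun p q => ⟨p.fst + q.fst, p.snd + q.snd⟩⟩
instance : Mul (Twisted A) := ⟨fun p q => ofProd (tmul (p.fst, p.snd) (q.fst, q.snd))⟩
instance : Zero (Twisted A) := ⟨⟨0, 0⟩⟩
instance : One (Twisted A) := ⟨⟨1, 0⟩⟩

@[simp] lemma add_fst (p q : Twisted A) : (p + q).fst = p.fst + q.fst := rfl
@[simp] lemma add_snd (p q : Twisted A) : (p + q).snd = p.snd + q.snd := rfl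
@[simp] lemma mul_fst (p q : Twisted A) : (p * q).fst = p.fst * q.fst + p.snd * q.snd := rfl
@[simp] lemma mul_snd (p q : Twisted A) : (p * q).snd = p.fst * q.snd + p.snd * q.fst := rfl
@[simp] lemma zero_fst : (0 : Twisted A).fst = 0 := rfl
@[simp] lemma zero_snd : (0 : Twisted A).snd = 0 := rfl
@[simp] lemma one_fst : (1 : Twisted A).fst = 1 := rfl
@[simp] lemma one_snd : (1 : Twisted A).snd = 0 := rfl

instance : CommSemiring (Twisted A) where
  add_assoc _ _ _ := by ext <;> simp [add_assoc]
  zero_add _ := by ext <;> simp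
  add_zero _ := by ext <;> simp
  add_comm _ _ := by ext <;> simp [add_comm]
  nsmul := nsmulRec
  mul_assoc _ _ _ := by ext <;> simp <;> ring
  one_mul _ := by ext <;> simp
  mul_one _ := by ext <;> simp
  left_distrib _ _ _ := by ext <;> simp <;> ring
  right_distrib _ _ _ := by ext <;> simp <;> ring
  zero_mul _ := by ext <;> simp
  mul_zero _ := by ext <;> simp
  mul_comm _ _ := by ext <;> simp <;> ring

lemma ofProd_tpow (p : A × A) (n : ℕ) : ofProd (tpow p n) = ofProd p ^ n := by
  induction n with
  | zero => rfl
  | succ n ih => rw [pow_succ, ← ih]; rfl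

lemma mk_zero_one_mul_mk (a b : A) : (⟨0, 1⟩ * ⟨a, b⟩ : Twisted A) = ⟨b, a⟩ := by
  ext <;> simp

lemma mk_zero_mul_mk (r a b : A) : (⟨r, 0⟩ * ⟨a, b⟩ : Twisted A) = ⟨r * a, r * b⟩ := by
  ext <;> simp

end Twisted

open Twisted

lemma Ideal.mem_radical_iff_exists_pos_pow {R : Type*} [CommSemiring R] {I : Ideal R} {x : R} :
    x ∈ I.radical ↔ ∃ n, 0 < n ∧ x ^ n ∈ I := by
  refine ⟨fun ⟨n, hn⟩ => ⟨n + 1, n.succ_pos, ?_⟩, fun ⟨n, _, hn⟩ => ⟨n, hn⟩⟩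
  rw [pow_succ]
  exact I.mul_mem_right x hn

lemma plusPart_plusPart {A : Type*} [CommSemiring A] (σ : Set (A × A)) :
    plusPart (plusPart σ) = plusPart σ := by
  ext ⟨a, b⟩
  refine ⟨fun ⟨c, d, h⟩ => ⟨c + d, by simpa only [add_assoc] using h⟩, fun h => ⟨0, by simpa⟩⟩

namespace IsCong

variable {A : Type*} [CommSemiring A] {ρ : Set (A × A)}

def toIdeal (hρ : IsCong ρ) : Ideal (Twisted A) where
  carrier := {p | (p.fst, p.snd) ∈ ρ}
  add_mem' hp hq := hρ.2.2.2.1 _ _ _ _ hp hq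
  zero_mem' := hρ.1 0
  smul_mem' c _ hx :=
    hρ.2.2.2.1 _ _ _ _ (hρ.2.2.2.2 _ _ _ _ (hρ.1 c.fst) hx)
      (hρ.2.2.2.2 _ _ _ _ (hρ.1 c.snd) (hρ.2.1 _ _ hx))

lemma mem_toIdeal (hρ : IsCong ρ) {p : Twisted A} : p ∈ hρ.toIdeal ↔ (p.fst, p.snd) ∈ ρ :=
  Iff.rfl

end IsCong

section PlusPartIdeal

variable {A : Type*} [CommSemiring A] (J : Ideal (Twisted A))

lemma mem_plusPart_ideal {a b : A} :
    (a, b) ∈ plusPart {p | ofProd p ∈ J} ↔ ∃ c, (⟨a + c, b + c⟩ : Twisted A) ∈ J :=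
  Iff.rfl

lemma plusPart_ideal_add {a b c d : A} (hab : (a, b) ∈ plusPart {p | ofProd p ∈ J})
    (hcd : (c, d) ∈ plusPart {p | ofProd p ∈ J}) :
    (a + c, b + d) ∈ plusPart {p | ofProd p ∈ J} := by
  rw [mem_plusPart_ideal] at hab hcd ⊢
  obtain ⟨e, he⟩ := hab
  obtain ⟨f, hf⟩ := hcd
  refine ⟨e + f, ?_⟩
  convert J.add_mem he hf using 1
  ext <;> simp only [add_fst, add_snd] <;> ring

lemma plusPart_ideal_trans {a b c : A} (hab : (a, b) ∈ plusPart {p | ofProd p ∈ J})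
    (hbc : (b, c) ∈ plusPart {p | ofProd p ∈ J}) :
    (a, c) ∈ plusPart {p | ofProd p ∈ J} := by
  rw [mem_plusPart_ideal] at hab hbc ⊢
  obtain ⟨e, he⟩ := hab
  obtain ⟨f, hf⟩ := hbc
  -- `(a + e, b + e) + (b + f, c + f) = (a + (b + e + f), c + (b + e + f))`
  refine ⟨b + e + f, ?_⟩
  convert J.add_mem he hf using 1
  ext <;> simp only [add_fst, add_snd] <;> ring

lemma plusPart_ideal_symm {a b : A} (hab : (a, b) ∈ plusPart {p | ofProd p ∈ J}) :
    (b, a) ∈ plusPart {p | ofProd p ∈ J} := by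
  rw [mem_plusPart_ideal] at hab ⊢
  obtain ⟨c, hc⟩ := hab
  exact ⟨c, mk_zero_one_mul_mk (A := A) _ _ ▸ J.mul_mem_left _ hc⟩

lemma plusPart_ideal_smul (r : A) {a b : A} (hab : (a, b) ∈ plusPart {p | ofProd p ∈ J}) :
    (r * a, r * b) ∈ plusPart {p | ofProd p ∈ J} := by
  rw [mem_plusPart_ideal] at hab ⊢
  obtain ⟨c, hc⟩ := hab
  refine ⟨r * c, ?_⟩
  rw [← mul_add, ← mul_add, ← mk_zero_mul_mk]
  exact J.mul_mem_left _ hc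

lemma isCong_plusPart_ideal (hJ : (⟨1, 1⟩ : Twisted A) ∈ J) :
    IsCong (plusPart {p | ofProd p ∈ J}) := by
  refine ⟨fun a => (mem_plusPart_ideal J).2 ⟨0, ?_⟩, fun _ _ => plusPart_ideal_symm J,
    fun _ _ _ => plusPart_ideal_trans J, fun _ _ _ _ => plusPart_ideal_add J,
    fun a b c d hab hcd => ?_⟩
  · simpa [mk_zero_mul_mk] using J.mul_mem_left ⟨a, 0⟩ hJ
  · have hac : (a * c, a * d) ∈ plusPart {p | ofProd p ∈ J} := plusPart_ideal_smul J a hcd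
    have hbd : (d * a, d * b) ∈ plusPart {p | ofProd p ∈ J} := plusPart_ideal_smul J d hab
    rw [mul_comm d a, mul_comm d b] at hbd
    exact plusPart_ideal_trans J hac hbd

end PlusPartIdeal

lemma rad_eq_plusPart_radical {A : Type*} [CommSemiring A] {ρ : Set (A × A)} (hρ : IsCong ρ) :
    rad ρ = plusPart {p | ofProd p ∈ hρ.toIdeal.radical} := by
  ext ⟨a, b⟩
  simp only [rad, plusPart, Set.mem_ofPred_eq, Ideal.mem_radical_iff_exists_pos_pow,
    ← ofProd_tpow, hρ.mem_toIdeal]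
  rfl

/-- For a congruence `ρ` on a commutative semiring `A`, the radical `√ρ` is a congruence
containing `ρ`, and `(√ρ)₊ = √ρ`. -/
theorem rad_isCong {A : Type*} [CommSemiring A] (ρ : Set (A × A)) (hρ : IsCong ρ) :
    IsCong (rad ρ) ∧ ρ ⊆ rad ρ ∧ plusPart (rad ρ) = rad ρ := by
  rw [rad_eq_plusPart_radical hρ]
  refine ⟨isCong_plusPart_ideal _ (Ideal.le_radical (hρ.1 1)), fun p hp => ⟨0, ?_⟩,
    plusPart_plusPart _⟩
  simpa using Ideal.le_radical (show ofProd p ∈ hρ.toIdeal from hp)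
end

section
/- Let A be a commutative semiring, R a relation on A, and a,b ∈ A. Then (a,b) ∈ R^c (the congruence generated by R) if and only if a = b, or there exists a finite sequence a = z₁, z₂, …, zₙ = b in A such that for each i, either (zᵢ, zᵢ₊₁) ∈ R^L or (zᵢ₊₁, zᵢ) ∈ R^L, where R^L = {(cx+y, dx+y) : (c,d) ∈ R, x,y ∈ A}. -/
/-- The congruence generated by a relation `R`: the smallest congruence containing `R`. -/
def conGenS {A : Type*} [CommSemiring A] (R : Set (A × A)) : Set (A × A) :=
  ⋂₀ {σ | IsCong σ ∧ R ⊆ σ}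

/-- `R^L = {(cx+y, dx+y) : (c,d) ∈ R, x,y ∈ A}`. -/
def relL {A : Type*} [CommSemiring A] (R : Set (A × A)) : Set (A × A) :=
  {p | ∃ c d x y : A, (c, d) ∈ R ∧ p = (c * x + y, d * x + y)}

/-!
Write `x ≈ y` for the equivalence relation generated by the one-step relation `R^L`. Since
`R^L` is stable under `x ↦ x + t` and `x ↦ x * t`, so is `≈`, which makes `≈` a congruence; it
contains `R` (take `x = 1`, `y = 0`) and lies in every congruence containing `R`, so it is
`R^c`. Finally `≈` is the reflexive-transitive closure of the symmetric closure of `R^L`, and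
its chains are the sequences of the statement.
-/

namespace Relation

variable {α β : Type*} {r : α → α → Prop}

theorem transGen_iff_exists_seq {a b : α} :
    TransGen r a b ↔ ∃ (n : ℕ) (z : ℕ → α), 0 < n ∧ z 0 = a ∧ z n = b ∧
      ∀ i < n, r (z i) (z (i + 1)) := by
  constructor
  · intro h
    induction h with
    | @single b hab =>
      exact ⟨1, fun i => if i = 0 then a else b, one_pos, rfl, rfl, by simpa using hab⟩
    | @tail b c _ hbc ih =>
      obtain ⟨n, z, hn, hz₀, hzn, hz⟩ := ih
      refine ⟨n + 1, fun i => if i ≤ n then z i else c, n.succ_pos, by simpa using hz₀,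
        by simp, fun i hi => ?_⟩
      rcases (Nat.lt_succ_iff.1 hi).lt_or_eq with hi | rfl
      · simpa [hi.le, Nat.succ_le_of_lt hi] using hz i hi
      · simpa [hzn] using hbc
  · rintro ⟨n, z, hn, rfl, rfl, hz⟩
    refine TransGen.lift z (fun _ _ h => h) _ _ (transGen_of_succ_of_lt _ (fun i hi => ?_) hn)
    simpa using hz i hi.2

theorem EqvGen.map {p : β → β → Prop} (f : α → β) (hf : ∀ a b, r a b → p (f a) (f b))
    {a b : α} (h : EqvGen r a b) : EqvGen p (f a) (f b) := by
  induction h with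
  | rel x y hxy => exact .rel _ _ (hf x y hxy)
  | refl x => exact .refl _
  | symm x y _ ih => exact .symm _ _ ih
  | trans x y z _ _ ih₁ ih₂ => exact .trans _ _ _ ih₁ ih₂

end Relation

open Relation

section

variable {A : Type*} [CommSemiring A] {R : Set (A × A)}

theorem subset_relL : R ⊆ relL R := fun ⟨c, d⟩ hcd => ⟨c, d, 1, 0, hcd, by simp⟩

theorem relL_add_right (t : A) {p q : A} (h : (p, q) ∈ relL R) : (p + t, q + t) ∈ relL R := by
  obtain ⟨c, d, x, y, hcd, hpq⟩ := h
  obtain ⟨rfl, rfl⟩ := Prod.ext_iff.1 hpq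
  exact ⟨c, d, x, y + t, hcd, by simp only [add_assoc]⟩

theorem relL_mul_right (t : A) {p q : A} (h : (p, q) ∈ relL R) : (p * t, q * t) ∈ relL R := by
  obtain ⟨c, d, x, y, hcd, hpq⟩ := h
  obtain ⟨rfl, rfl⟩ := Prod.ext_iff.1 hpq
  exact ⟨c, d, x * t, y * t, hcd, by simp only [add_mul, mul_assoc]⟩

theorem relL_add_left (t : A) {p q : A} (h : (p, q) ∈ relL R) : (t + p, t + q) ∈ relL R := by
  simpa only [add_comm t] using relL_add_right t h

theorem relL_mul_left (t : A) {p q : A} (h : (p, q) ∈ relL R) : (t * p, t * q) ∈ relL R := by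
  simpa only [mul_comm t] using relL_mul_right t h

theorem IsCong.relL_subset {σ : Set (A × A)} (hσ : IsCong σ) (hR : R ⊆ σ) : relL R ⊆ σ := by
  rintro _ ⟨c, d, x, y, hcd, rfl⟩
  exact hσ.2.2.2.1 _ _ _ _ (hσ.2.2.2.2 _ _ _ _ (hR hcd) (hσ.1 x)) (hσ.1 y)

theorem IsCong.mem_of_eqvGen {σ : Set (A × A)} (hσ : IsCong σ) {r : A → A → Prop}
    (hr : ∀ a b, r a b → (a, b) ∈ σ) {a b : A} (h : EqvGen r a b) : (a, b) ∈ σ := by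
  induction h with
  | rel x y hxy => exact hr x y hxy
  | refl x => exact hσ.1 x
  | symm x y _ ih => exact hσ.2.1 x y ih
  | trans x y z _ _ ih₁ ih₂ => exact hσ.2.2.1 x y z ih₁ ih₂

theorem isCong_setOf_eqvGen_relL :
    IsCong {p : A × A | EqvGen (fun a b => (a, b) ∈ relL R) p.1 p.2} := by
  refine ⟨EqvGen.refl, EqvGen.symm, EqvGen.trans, fun a b c d hab hcd => ?_,
    fun a b c d hab hcd => ?_⟩
  · exact .trans _ (b + c) _ (hab.map (· + c) fun _ _ => relL_add_right c)
      (hcd.map (b + ·) fun _ _ => relL_add_left b)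
  · exact .trans _ (b * c) _ (hab.map (· * c) fun _ _ => relL_mul_right c)
      (hcd.map (b * ·) fun _ _ => relL_mul_left b)

theorem conGenS_eq_setOf_eqvGen_relL :
    conGenS R = {p : A × A | EqvGen (fun a b => (a, b) ∈ relL R) p.1 p.2} := by
  refine Set.Subset.antisymm (Set.sInter_subset_of_mem
    ⟨isCong_setOf_eqvGen_relL, fun p hp => EqvGen.rel _ _ (subset_relL hp)⟩) ?_
  rintro ⟨a, b⟩ hab σ ⟨hσ, hR⟩
  exact hσ.mem_of_eqvGen (fun _ _ h => hσ.relL_subset hR h) hab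

end

/-- `(a,b) ∈ R^c` iff `a = b` or there is a finite sequence `a = z₀, …, zₙ = b` with
each consecutive pair (in one direction or the other) in `R^L`. -/
theorem mem_conGen_iff_chain {A : Type*} [CommSemiring A] (R : Set (A × A)) (a b : A) :
    (a, b) ∈ conGenS R ↔
      a = b ∨ ∃ (n : ℕ) (z : ℕ → A), 0 < n ∧ z 0 = a ∧ z n = b ∧
        ∀ i < n, (z i, z (i + 1)) ∈ relL R ∨ (z (i + 1), z i) ∈ relL R := by
  rw [conGenS_eq_setOf_eqvGen_relL, Set.mem_ofPred_eq, ← EqvGen.reflTransGen_symmGen,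
    reflTransGen_iff_eq_or_transGen, transGen_iff_exists_seq, eq_comm]
  rfl
end

section
/- Let A be a commutative semiring, E an equivalence relation on A, and define E^♭ = {(a,b) ∈ A × A : (ax+y, bx+y) ∈ E for all x,y ∈ A}. Then E^♭ is the largest congruence on A contained in E. -/
/-- `E^♭ = {(a,b) : (ax+y, bx+y) ∈ E for all x, y}`. -/
def flatPart {A : Type*} [CommSemiring A] (E : Set (A × A)) : Set (A × A) :=
  {p | ∀ x y : A, (p.1 * x + y, p.2 * x + y) ∈ E}

/-!
A pair lies in `E^♭` iff every affine map `t ↦ t x + y` sends it into `E`. Affine maps are closed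
under composition with `t ↦ t c` and `t ↦ t + c`, so `E^♭` is stable under these translations;
together with transitivity this gives compatibility with `+` and `*`, since
`a + c ~ b + c ~ b + d` and `a c ~ b c ~ b d`. Conversely, a congruence inside `E` is stable under
every affine map, hence lies in `E^♭`.
-/

section FlatPart

variable {A : Type*} [CommSemiring A] {E : Set (A × A)}

theorem flatPart_subset : flatPart E ⊆ E := fun p hp => by
  simpa using hp 1 0

theorem mul_right_mem_flatPart {a b : A} (h : (a, b) ∈ flatPart E) (c : A) :
    (a * c, b * c) ∈ flatPart E := fun x y => by
  simpa only [mul_assoc] using h (c * x) y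

theorem add_right_mem_flatPart {a b : A} (h : (a, b) ∈ flatPart E) (c : A) :
    (a + c, b + c) ∈ flatPart E := fun x y => by
  simpa only [add_mul, add_assoc] using h x (c * x + y)

theorem swap_mem_flatPart (hsymm : ∀ a b : A, (a, b) ∈ E → (b, a) ∈ E) {a b : A}
    (h : (a, b) ∈ flatPart E) : (b, a) ∈ flatPart E := fun x y =>
  hsymm _ _ (h x y)

theorem mem_flatPart_trans (htrans : ∀ a b c : A, (a, b) ∈ E → (b, c) ∈ E → (a, c) ∈ E)
    {a b c : A} (hab : (a, b) ∈ flatPart E) (hbc : (b, c) ∈ flatPart E) :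
    (a, c) ∈ flatPart E := fun x y =>
  htrans _ _ _ (hab x y) (hbc x y)

theorem isCong_flatPart (hrefl : ∀ a : A, (a, a) ∈ E)
    (hsymm : ∀ a b : A, (a, b) ∈ E → (b, a) ∈ E)
    (htrans : ∀ a b c : A, (a, b) ∈ E → (b, c) ∈ E → (a, c) ∈ E) :
    IsCong (flatPart E) := by
  refine ⟨fun a x y => hrefl _, fun a b => swap_mem_flatPart hsymm,
    fun a b c => mem_flatPart_trans htrans, fun a b c d hab hcd => ?_,
    fun a b c d hab hcd => ?_⟩
  · have hcb : (c + b, d + b) ∈ flatPart E := add_right_mem_flatPart hcd b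
    rw [add_comm c, add_comm d] at hcb
    exact mem_flatPart_trans htrans (add_right_mem_flatPart hab c) hcb
  · have hcb : (c * b, d * b) ∈ flatPart E := mul_right_mem_flatPart hcd b
    rw [mul_comm c, mul_comm d] at hcb
    exact mem_flatPart_trans htrans (mul_right_mem_flatPart hab c) hcb

theorem IsCong.subset_flatPart {σ : Set (A × A)} (hσ : IsCong σ) (hσE : σ ⊆ E) :
    σ ⊆ flatPart E := by
  obtain ⟨hrefl, -, -, hadd, hmul⟩ := hσ
  exact fun ⟨a, b⟩ hab x y => hσE (hadd _ _ _ _ (hmul _ _ _ _ hab (hrefl x)) (hrefl y))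

end FlatPart

/-- If `E` is an equivalence relation on a commutative semiring `A`, then `E^♭` is the
largest congruence on `A` contained in `E`. -/
theorem flatPart_largest_congruence {A : Type*} [CommSemiring A] (E : Set (A × A))
    (hrefl : ∀ a : A, (a, a) ∈ E)
    (hsymm : ∀ a b : A, (a, b) ∈ E → (b, a) ∈ E)
    (htrans : ∀ a b c : A, (a, b) ∈ E → (b, c) ∈ E → (a, c) ∈ E) :
    IsCong (flatPart E) ∧ flatPart E ⊆ E ∧
      ∀ σ : Set (A × A), IsCong σ → σ ⊆ E → σ ⊆ flatPart E :=
  ⟨isCong_flatPart hrefl hsymm htrans, flatPart_subset, fun _ hσ hσE => hσ.subset_flatPart hσE⟩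
end
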